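/- arXiv:math/0405333 — 3 statements merged into one kernel-verified Lean document; each statement's English description precedes it below -/
import Mathlib

section
/- For w in a Weyl group W with elements T_w (reduced-word products of the idempotent generators T_i) and ε_w (reduced-word products of ε_i = 1 − T_i) in the nil-Hecke algebra, one has ε_w = Σ_{v ≤ w} (−1)^{ℓ(v)} T_v and T_w = Σ_{v ≤ w} (−1)^{ℓ(v)} ε_v, where ≤ is the Bruhat order and ℓ is the length function. -/
open scoped Classical TensorProduct

noncomputable section

/-- Alternating product `a * b * a * ⋯` with `m` factors. -/
def altProd {A : Type*} [Monoid A] : A → A → ℕ → A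
  | _, _, 0 => 1
  | a, b, (k+1) => a * altProd b a k

/-- Alternating composition `g ∘ h ∘ g ∘ ⋯` with `m` factors. -/
def altComp {α : Type*} : (α → α) → (α → α) → ℕ → α → α
  | _, _, 0 => id
  | g, h, (k+1) => g ∘ altComp h g k

/-- Bruhat-Chevalley order on a Coxeter group, via the subword characterization. -/
def BruhatLE {B W : Type*} [Group W] {M : CoxeterMatrix B} (cs : CoxeterSystem M W)
    (v w : W) : Prop :=
  ∃ l : List B, cs.IsReduced l ∧ cs.wordProd l = w ∧
    ∃ l' : List B, l'.Sublist l ∧ cs.wordProd l' = v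

/-- Strict Bruhat-Chevalley order. -/
def BruhatLT {B W : Type*} [Group W] {M : CoxeterMatrix B} (cs : CoxeterSystem M W)
    (v w : W) : Prop :=
  BruhatLE cs v w ∧ v ≠ w

/-! Induct on `ℓ w` along a left descent `s = s_i` of `w`. Then `ε_w = (1 - T_i) ε_{sw}`, and
`1 - T_i` kills `T_v` when `sv < v` while it turns `(-1)^ℓ(v) T_v` into
`(-1)^ℓ(v) T_v + (-1)^ℓ(sv) T_{sv}` when `v < sv`. Left multiplication by `s` pairs the `v ≤ w`
with and without the left descent `s`, and those without it are exactly the `v ≤ sw` with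
`v < sv`, so the sum over `v ≤ sw` becomes the sum over `v ≤ w`.

This uses the subword property (a `v ≤ w` is a subword of every reduced word for `w`, not just
of one), proved through the description of the Bruhat order by reflections, its lifting
property, and the strong exchange condition; the latter comes from the standard representation
of `W` on `W × {±1}`. The second identity is the first one for the idempotents `1 - T_i`. -/

open Finset

section ConjFlip

variable {G : Type*} [Group G]

def conjFlip (g : G) (p : G × ℤˣ) : G × ℤˣ :=
  (g * p.1 * g⁻¹, p.2 * if p.1 = g then -1 else 1)

theorem conj_eq_iff_eq_conj (g t x : G) : g * t * g⁻¹ = x ↔ t = g⁻¹ * x * g := by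
  constructor <;> rintro rfl <;> group

theorem conjFlip_involutive {g : G} (hg : g⁻¹ = g) : Function.Involutive (conjFlip g) := by
  rintro ⟨t, e⟩
  have hgg : g * g = 1 := mul_eq_one_iff_inv_eq.mpr hg
  refine Prod.ext ?_ ?_
  · simp only [conjFlip, hg, ← mul_assoc, hgg, one_mul]
    rw [mul_assoc, hgg, mul_one]
  · simp only [conjFlip, conj_eq_iff_eq_conj, inv_mul_cancel, one_mul]
    split_ifs <;> simp

theorem conjFlip_comp_iterate_apply {a b : G} (ha : a⁻¹ = a) (hb : b⁻¹ = b) (k : ℕ) (t : G)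
    (e : ℤˣ) :
    (conjFlip a ∘ conjFlip b)^[k] (t, e) =
      ((a * b) ^ k * t * ((a * b) ^ k)⁻¹,
        e * ∏ q ∈ range (2 * k), if t = b * (a * b) ^ q then -1 else 1) := by
  set z := a * b
  have hcomm (k : ℕ) : (z ^ k)⁻¹ * b = b * z ^ k := by
    have hz : SemiconjBy b z z⁻¹ := by
      simp only [SemiconjBy, z, mul_inv_rev, hb, ha, mul_assoc]
    rw [← inv_pow, (hz.pow_right k).eq]
  induction k with
  | zero => simp
  | succ k ih =>
    set X := z ^ k
    have hflip₁ : X * t * X⁻¹ = b ↔ t = b * z ^ (2 * k) := by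
      rw [conj_eq_iff_eq_conj, hcomm, mul_assoc, ← pow_add, ← two_mul]
    have hflip₂ : b * (X * t * X⁻¹) * b⁻¹ = a ↔ t = b * z ^ (2 * k + 1) := by
      have hconj : (b * X)⁻¹ * a * (b * X) = b * z ^ (2 * k + 1) :=
        calc (b * X)⁻¹ * a * (b * X) = X⁻¹ * b * z * X := by
              simp only [z, mul_inv_rev, hb, mul_assoc]
          _ = b * z ^ (2 * k + 1) := by
              rw [hcomm, mul_assoc, mul_assoc, ← pow_succ', ← pow_add, two_mul, add_assoc]
      rw [← hconj, ← conj_eq_iff_eq_conj, mul_inv_rev]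
      simp only [mul_assoc]
    rw [Function.iterate_succ_apply', ih]
    refine Prod.ext ?_ ?_
    · simp only [Function.comp_apply, conjFlip, X, z, pow_succ', mul_inv_rev, mul_assoc]
    · simp only [Function.comp_apply, conjFlip, hflip₁, hflip₂]
      simp only [mul_add, mul_one, prod_range_succ, mul_assoc]

theorem prod_range_two_mul_pow_eq_one {z : G} {m : ℕ} (hz : z ^ m = 1) (f : G → ℤˣ) :
    ∏ q ∈ range (2 * m), f (z ^ q) = 1 := by
  rw [two_mul, prod_range_add]
  simp only [pow_add, hz, one_mul, Int.units_mul_self]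

theorem conjFlip_comp_iterate_eq_id {a b : G} (ha : a⁻¹ = a) (hb : b⁻¹ = b) {m : ℕ}
    (hm : (a * b) ^ m = 1) : (conjFlip a ∘ conjFlip b)^[m] = id := by
  funext ⟨t, e⟩
  rw [conjFlip_comp_iterate_apply ha hb, hm, prod_range_two_mul_pow_eq_one hm
    (fun z => if t = b * z then -1 else 1)]
  simp

end ConjFlip

namespace CoxeterSystem

variable {B W : Type*} [Group W] {M : CoxeterMatrix B} (cs : CoxeterSystem M W)

local prefix:100 "s" => cs.simple
local prefix:100 "π" => cs.wordProd
local prefix:100 "ℓ" => cs.length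

def simpleFlip (i : B) : Equiv.Perm (W × ℤˣ) :=
  (conjFlip_involutive (cs.inv_simple i)).toPerm

theorem isLiftable_simpleFlip : M.IsLiftable cs.simpleFlip := fun i j => by
  ext1 p
  rw [Equiv.Perm.coe_pow, Equiv.Perm.coe_mul]
  exact congrFun (conjFlip_comp_iterate_eq_id (cs.inv_simple i) (cs.inv_simple j)
    (cs.simple_mul_simple_pow i j)) p

def reflRep : W →* Equiv.Perm (W × ℤˣ) := cs.lift ⟨cs.simpleFlip, cs.isLiftable_simpleFlip⟩

def reflSign (w t : W) : ℤˣ := (cs.reflRep w (t, 1)).2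

theorem reflRep_simple (i : B) : cs.reflRep (s i) = cs.simpleFlip i :=
  cs.lift_apply_simple _ i

theorem reflRep_apply (w t : W) (e : ℤˣ) :
    cs.reflRep w (t, e) = (w * t * w⁻¹, e * cs.reflSign w t) := by
  induction w using cs.simple_induction_left generalizing t e with
  | one => simp [reflSign]
  | mul_simple_left w i ih =>
    rw [reflSign, map_mul, Equiv.Perm.mul_apply, Equiv.Perm.mul_apply, ih, ih, reflRep_simple]
    simp only [simpleFlip, Function.Involutive.coe_toPerm, conjFlip, one_mul]
    exact Prod.ext (by group) (mul_assoc _ _ _)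

theorem reflSign_mul (w₁ w₂ t : W) :
    cs.reflSign (w₁ * w₂) t = cs.reflSign w₂ t * cs.reflSign w₁ (w₂ * t * w₂⁻¹) := by
  simpa [map_mul, reflRep_apply] using (congrArg Prod.snd (cs.reflRep_apply (w₁ * w₂) t 1)).symm

@[simp]
theorem reflSign_one (t : W) : cs.reflSign 1 t = 1 := by simp [reflSign]

theorem reflSign_simple (i : B) (t : W) :
    cs.reflSign (s i) t = if t = s i then -1 else 1 := by
  simp [reflSign, reflRep_simple, simpleFlip, conjFlip]

theorem reflSign_wordProd (ω : List B) (t : W) :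
    cs.reflSign (π ω) t = (-1) ^ (cs.rightInvSeq ω).count t := by
  induction ω with
  | nil => simp
  | cons i ω ih =>
    rw [wordProd_cons, reflSign_mul, ih, reflSign_simple, rightInvSeq, List.count_cons]
    simp only [beq_iff_eq, conj_eq_iff_eq_conj, eq_comm (a := t)]
    split_ifs <;> simp [pow_succ]

theorem reflSign_self {t : W} (ht : cs.IsReflection t) : cs.reflSign t t = -1 := by
  obtain ⟨x, i, rfl⟩ := ht
  have h₁ := cs.reflSign_mul (x * s i) x⁻¹ (x * s i * x⁻¹)
  have h₂ := cs.reflSign_mul x (s i) (s i)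
  have h₃ := cs.reflSign_mul x x⁻¹ (x * s i * x⁻¹)
  rw [show x⁻¹ * (x * s i * x⁻¹) * x⁻¹⁻¹ = s i by group] at h₁ h₃
  rw [show s i * s i * (s i)⁻¹ = s i by group, reflSign_simple, if_pos rfl] at h₂
  rw [mul_inv_cancel, reflSign_one] at h₃
  rw [h₁, h₂, mul_left_comm, ← h₃, mul_one]

theorem mem_rightInvSeq_of_reflSign_eq_neg_one {ω : List B} {t : W}
    (h : cs.reflSign (π ω) t = -1) : t ∈ cs.rightInvSeq ω := by
  rw [reflSign_wordProd] at h
  by_contra hnot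
  rw [List.count_eq_zero_of_not_mem hnot, pow_zero] at h
  exact absurd h (by decide)

theorem isRightInversion_of_reflSign_eq_neg_one {w t : W} (h : cs.reflSign w t = -1) :
    cs.IsRightInversion w t := by
  obtain ⟨ω, hω, rfl⟩ := cs.exists_isReduced w
  exact cs.isRightInversion_of_mem_rightInvSeq hω (cs.mem_rightInvSeq_of_reflSign_eq_neg_one h)

theorem reflSign_eq_neg_one_of_isRightInversion {w t : W} (h : cs.IsRightInversion w t) :
    cs.reflSign w t = -1 := by
  have hwt : cs.reflSign (w * t) t = 1 :=
    (Int.units_eq_one_or _).resolve_right fun h' =>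
      (h.1.isRightInversion_mul_left_iff.mp (cs.isRightInversion_of_reflSign_eq_neg_one h')) h
  have := cs.reflSign_mul (w * t) t t
  rw [show w * t * t = w by rw [mul_assoc, h.1.mul_self, mul_one],
    show t * t * t⁻¹ = t by group, cs.reflSign_self h.1, hwt] at this
  simpa using this

/-- The strong exchange condition. -/
theorem exists_wordProd_eraseIdx_eq_mul {ω : List B} {t : W}
    (h : cs.IsRightInversion (π ω) t) : ∃ j < ω.length, π (ω.eraseIdx j) = π ω * t := by
  obtain ⟨j, hj, rfl⟩ := List.mem_iff_getElem.mp
    (cs.mem_rightInvSeq_of_reflSign_eq_neg_one (cs.reflSign_eq_neg_one_of_isRightInversion h))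
  refine ⟨j, by simpa using hj, ?_⟩
  rw [← List.getD_eq_getElem _ 1 hj, wordProd_mul_getD_rightInvSeq]


theorem isReduced_cons_iff {i : B} {ω : List B} :
    cs.IsReduced (i :: ω) ↔ cs.IsReduced ω ∧ ¬cs.IsLeftDescent (π ω) i := by
  rw [not_isLeftDescent_iff, IsReduced, IsReduced, wordProd_cons, List.length_cons]
  have := cs.length_wordProd_le ω
  rcases cs.length_simple_mul (π ω) i with h | h <;> omega

theorem exists_isReduced_cons_of_isLeftDescent {w : W} {i : B} (h : cs.IsLeftDescent w i) :
    ∃ ω, cs.IsReduced (i :: ω) ∧ w = π (i :: ω) := by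
  obtain ⟨ω, hω, hπ⟩ := cs.exists_isReduced (s i * w)
  refine ⟨ω, cs.isReduced_cons_iff.mpr ⟨hω, ?_⟩, ?_⟩
  · rwa [← hπ, ← isLeftDescent_iff_not_isLeftDescent_mul]
  · rw [wordProd_cons, ← hπ, simple_mul_simple_cancel_left]

def ReflStep (u w : W) : Prop := ∃ t, cs.IsRightInversion w t ∧ w * t = u

abbrev ReflLE : W → W → Prop := Relation.ReflTransGen cs.ReflStep

theorem reflStep_of_not_isLeftDescent {u : W} {i : B} (h : ¬cs.IsLeftDescent u i) :
    cs.ReflStep u (s i * u) := by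
  have hu : s i * u * (u⁻¹ * s i * u) = u := by simp [mul_assoc]
  refine ⟨u⁻¹ * s i * u, ⟨?_, ?_⟩, hu⟩
  · simpa using (cs.isReflection_simple i).conj u⁻¹
  · rw [hu]
    exact lt_of_le_of_ne (not_lt.mp h) (cs.length_simple_mul_ne u i).symm

theorem reflStep_of_isLeftDescent {w : W} {i : B} (h : cs.IsLeftDescent w i) :
    cs.ReflStep (s i * w) w := by
  simpa using cs.reflStep_of_not_isLeftDescent (cs.isLeftDescent_iff_not_isLeftDescent_mul.mp h)

theorem reflStep_wordProd_eraseIdx {ω : List B} (hω : cs.IsReduced ω) {j : ℕ}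
    (hj : j < ω.length) : cs.ReflStep (π (ω.eraseIdx j)) (π ω) := by
  refine ⟨(cs.rightInvSeq ω).getD j 1, cs.isRightInversion_of_mem_rightInvSeq hω ?_,
    cs.wordProd_mul_getD_rightInvSeq ω j⟩
  rw [List.getD_eq_getElem _ _ (by simpa using hj)]
  exact List.getElem_mem _

theorem ReflLE.exists_sublist {v w : W} (h : cs.ReflLE v w) {ω : List B} (hω : π ω = w) :
    ∃ ω', ω'.Sublist ω ∧ π ω' = v := by
  induction h generalizing ω with
  | refl => exact ⟨ω, .refl ω, hω⟩
  | tail _ hstep ih =>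
    obtain ⟨t, ht, rfl⟩ := hstep
    subst hω
    obtain ⟨j, -, hj⟩ := cs.exists_wordProd_eraseIdx_eq_mul ht
    obtain ⟨ω', hω', hπ⟩ := ih hj
    exact ⟨ω', hω'.trans (List.eraseIdx_sublist ω j), hπ⟩

theorem reflLE_simple_mul_of_reflStep {x y : W} {i : B} (hxy : cs.ReflStep x y)
    (hy : cs.IsLeftDescent y i) : cs.ReflLE (s i * x) y := by
  obtain ⟨t, ht, rfl⟩ := hxy
  obtain ⟨ω, hω, rfl⟩ := cs.exists_isReduced_cons_of_isLeftDescent hy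
  obtain ⟨j, hj, hje⟩ := cs.exists_wordProd_eraseIdx_eq_mul ht
  rw [← hje]
  cases j with
  | zero => simpa [wordProd_cons] using Relation.ReflTransGen.refl
  | succ j =>
    rw [List.eraseIdx_cons_succ, wordProd_cons, simple_mul_simple_cancel_left, wordProd_cons]
    have hω' := cs.isReduced_cons_iff.mp hω
    exact .tail (.single (cs.reflStep_wordProd_eraseIdx hω'.1 (by simpa using hj)))
      (cs.reflStep_of_not_isLeftDescent hω'.2)

/-- The lifting property. -/
theorem ReflLE.simple_mul {u w : W} (h : cs.ReflLE u w) {i : B} (hw : ¬cs.IsLeftDescent w i) :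
    cs.ReflLE (s i * u) (s i * w) := by
  have hup : cs.ReflLE w (s i * w) := .single (cs.reflStep_of_not_isLeftDescent hw)
  induction h using Relation.ReflTransGen.head_induction_on with
  | refl => exact .refl
  | @head a c hac hcw ih =>
    by_cases ha : cs.IsLeftDescent a i
    · exact .head (cs.reflStep_of_isLeftDescent ha) ((Relation.ReflTransGen.head hac hcw).trans hup)
    by_cases hc : cs.IsLeftDescent c i
    · exact (cs.reflLE_simple_mul_of_reflStep hac hc).trans (hcw.trans hup)
    obtain ⟨t, ht, rfl⟩ := hac
    refine .head ⟨t, ⟨ht.1, ?_⟩, mul_assoc _ _ _⟩ ih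
    rw [mul_assoc, cs.not_isLeftDescent_iff.mp ha, cs.not_isLeftDescent_iff.mp hc]
    exact Nat.succ_lt_succ ht.2

theorem reflLE_wordProd_of_sublist {ω' ω : List B} (h : ω'.Sublist ω) (hω : cs.IsReduced ω) :
    cs.ReflLE (π ω') (π ω) := by
  induction h with
  | slnil => exact .refl
  | cons i _ ih =>
    have hω' := cs.isReduced_cons_iff.mp hω
    rw [wordProd_cons]
    exact (ih hω'.1).tail (cs.reflStep_of_not_isLeftDescent hω'.2)
  | cons_cons i _ ih =>
    have hω' := cs.isReduced_cons_iff.mp hω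
    rw [wordProd_cons, wordProd_cons]
    exact (ih hω'.1).simple_mul cs hω'.2

theorem bruhatLE_iff_reflLE {v w : W} : BruhatLE cs v w ↔ cs.ReflLE v w := by
  constructor
  · rintro ⟨ω, hω, rfl, ω', h, rfl⟩
    exact cs.reflLE_wordProd_of_sublist h hω
  · intro h
    obtain ⟨ω, hω, rfl⟩ := cs.exists_isReduced w
    obtain ⟨ω', h', hπ⟩ := h.exists_sublist cs rfl
    exact ⟨ω, hω, rfl, ω', h', hπ⟩

theorem _root_.BruhatLE.trans {u v w : W} (huv : BruhatLE cs u v) (hvw : BruhatLE cs v w) :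
    BruhatLE cs u w :=
  cs.bruhatLE_iff_reflLE.mpr
    ((cs.bruhatLE_iff_reflLE.mp huv).trans (cs.bruhatLE_iff_reflLE.mp hvw))

/-- The subword property. -/
theorem _root_.BruhatLE.exists_sublist {v w : W} (h : BruhatLE cs v w) {ω : List B}
    (hω : π ω = w) :
    ∃ ω', ω'.Sublist ω ∧ π ω' = v :=
  (cs.bruhatLE_iff_reflLE.mp h).exists_sublist cs hω

theorem bruhatLE_one_iff {v : W} : BruhatLE cs v 1 ↔ v = 1 := by
  constructor
  · intro h
    obtain ⟨ω', h', rfl⟩ := h.exists_sublist cs (ω := []) rfl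
    rw [List.sublist_nil.mp h', wordProd_nil]
  · rintro rfl
    exact ⟨[], by simp [IsReduced], rfl, [], .refl [], rfl⟩

theorem bruhatLE_simple_mul_self {v : W} {i : B} (h : ¬cs.IsLeftDescent v i) :
    BruhatLE cs v (s i * v) :=
  cs.bruhatLE_iff_reflLE.mpr (.single (cs.reflStep_of_not_isLeftDescent h))

theorem bruhatLE_iff_of_isLeftDescent {v w : W} {i : B} (hw : cs.IsLeftDescent w i) :
    BruhatLE cs v w ↔ BruhatLE cs v (s i * w) ∨ BruhatLE cs (s i * v) (s i * w) := by
  obtain ⟨ω, hω, rfl⟩ := cs.exists_isReduced_cons_of_isLeftDescent hw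
  have hω' := (cs.isReduced_cons_iff.mp hω).1
  rw [wordProd_cons, simple_mul_simple_cancel_left]
  constructor
  · intro h
    obtain ⟨ω', h', rfl⟩ := h.exists_sublist cs (cs.wordProd_cons i ω)
    rcases List.sublist_cons_iff.mp h' with h' | ⟨ω'', rfl, h''⟩
    · exact .inl ⟨ω, hω', rfl, ω', h', rfl⟩
    · refine .inr ⟨ω, hω', rfl, ω'', h'', ?_⟩
      rw [wordProd_cons, simple_mul_simple_cancel_left]
  · rintro (h | h)
    · obtain ⟨ω', h', rfl⟩ := h.exists_sublist cs rfl
      exact ⟨i :: ω, hω, wordProd_cons cs i ω, ω', h'.cons i, rfl⟩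
    · obtain ⟨ω', h', hπ⟩ := h.exists_sublist cs rfl
      refine ⟨i :: ω, hω, wordProd_cons cs i ω, i :: ω', h'.cons_cons i, ?_⟩
      rw [wordProd_cons, hπ, simple_mul_simple_cancel_left]

theorem bruhatLE_simple_mul_iff {v w : W} {i : B} (hw : cs.IsLeftDescent w i)
    (hv : ¬cs.IsLeftDescent v i) : BruhatLE cs v (s i * w) ↔ BruhatLE cs v w := by
  rw [cs.bruhatLE_iff_of_isLeftDescent hw]
  exact (or_iff_left_of_imp (cs.bruhatLE_simple_mul_self hv).trans).symm

theorem simple_mul_bruhatLE_simple_mul_iff {v w : W} {i : B} (hw : cs.IsLeftDescent w i)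
    (hv : cs.IsLeftDescent v i) : BruhatLE cs (s i * v) (s i * w) ↔ BruhatLE cs v w := by
  have hsv : BruhatLE cs (s i * v) v := by
    simpa using cs.bruhatLE_simple_mul_self (cs.isLeftDescent_iff_not_isLeftDescent_mul.mp hv)
  rw [cs.bruhatLE_iff_of_isLeftDescent hw]
  exact (or_iff_right_of_imp hsv.trans).symm

/-- Left multiplication by `s i` pairs the elements below `w` with and without the left
descent `i`, and those without it are exactly the ones below `s i * w`. -/
theorem sum_bruhatLE_eq_of_isLeftDescent [Fintype W] {A : Type*} [AddCommMonoid A]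
    (φ : W → A) {w : W} {i : B} (hw : cs.IsLeftDescent w i) :
    ∑ v ∈ univ.filter (BruhatLE cs · w), φ v =
      ∑ v ∈ univ.filter (BruhatLE cs · (s i * w)),
        if cs.IsLeftDescent v i then 0 else φ v + φ (s i * v) := by
  rw [sum_ite, sum_const_zero, zero_add, sum_add_distrib,
    ← sum_filter_add_sum_filter_not _ (cs.IsLeftDescent · i), add_comm]
  congr 1
  · congr 1
    ext v
    simp only [filter_filter, mem_filter, mem_univ, true_and, and_congr_left_iff]
    exact fun hv => (cs.bruhatLE_simple_mul_iff hw hv).symm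
  · refine sum_nbij' (s i * ·) (s i * ·) ?_ ?_ (by simp) (by simp) (by simp)
    · intro v hv
      simp only [filter_filter, mem_filter, mem_univ, true_and] at hv ⊢
      rw [← cs.isLeftDescent_iff_not_isLeftDescent_mul,
        cs.simple_mul_bruhatLE_simple_mul_iff hw hv.2]
      exact hv
    · intro v hv
      simp only [filter_filter, mem_filter, mem_univ, true_and] at hv ⊢
      have hsv : cs.IsLeftDescent (s i * v) i := by
        rw [cs.isLeftDescent_iff_not_isLeftDescent_mul, simple_mul_simple_cancel_left]
        exact hv.2
      refine ⟨?_, hsv⟩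
      rw [← cs.simple_mul_bruhatLE_simple_mul_iff hw hsv, simple_mul_simple_cancel_left]
      exact hv.1

section ReducedWordProd

variable {A : Type*} [Ring A]

def IsReducedWordProd (S : B → A) (F : W → A) : Prop :=
  ∀ ω : List B, cs.IsReduced ω → F (π ω) = (ω.map S).prod

variable {cs} {S : B → A} {F : W → A}

theorem IsReducedWordProd.map_one (hF : cs.IsReducedWordProd S F) : F 1 = 1 := by
  simpa using hF [] (by simp [IsReduced])

theorem IsReducedWordProd.simple_mul (hF : cs.IsReducedWordProd S F) {v : W} {i : B}
    (h : ¬cs.IsLeftDescent v i) : F (s i * v) = S i * F v := by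
  obtain ⟨ω, hω, rfl⟩ := cs.exists_isReduced v
  rw [← wordProd_cons, hF _ (cs.isReduced_cons_iff.mpr ⟨hω, h⟩), hF ω hω, List.map_cons,
    List.prod_cons]

theorem IsReducedWordProd.mul_of_isLeftDescent (hF : cs.IsReducedWordProd S F) {v : W} {i : B}
    (hS : IsIdempotentElem (S i)) (h : cs.IsLeftDescent v i) : S i * F v = F v := by
  have hv := hF.simple_mul (cs.isLeftDescent_iff_not_isLeftDescent_mul.mp h)
  rw [simple_mul_simple_cancel_left] at hv
  rw [hv, ← mul_assoc, hS.eq]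

theorem IsReducedWordProd.one_sub_mul_neg_one_pow_mul (hF : cs.IsReducedWordProd S F)
    {i : B} (hS : IsIdempotentElem (S i)) (v : W) :
    (1 - S i) * ((-1) ^ ℓ v * F v) =
      if cs.IsLeftDescent v i then 0 else (-1) ^ ℓ v * F v + (-1) ^ ℓ (s i * v) * F (s i * v) := by
  rw [((Commute.neg_one_right _).pow_right _).left_comm, sub_mul, one_mul]
  split_ifs with h
  · rw [hF.mul_of_isLeftDescent hS h, sub_self, mul_zero]
  · rw [← hF.simple_mul h, cs.not_isLeftDescent_iff.mp h, pow_succ, mul_neg_one, neg_mul,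
      mul_sub, sub_eq_add_neg]

theorem IsReducedWordProd.eq_sum_bruhatLE [Fintype W] {G : W → A}
    (hS : ∀ i, IsIdempotentElem (S i)) (hF : cs.IsReducedWordProd S F)
    (hG : cs.IsReducedWordProd (fun i => 1 - S i) G) (w : W) :
    G w = ∑ v ∈ univ.filter (BruhatLE cs · w), (-1) ^ ℓ v * F v := by
  by_cases hw : w = 1
  · subst hw
    rw [show univ.filter (BruhatLE cs · 1) = {1} by ext; simp [bruhatLE_one_iff]]
    simp [hF.map_one, hG.map_one]
  obtain ⟨i, hi⟩ := cs.exists_leftDescent_of_ne_one hw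
  have ih := hF.eq_sum_bruhatLE hS hG (s i * w)
  calc G w = (1 - S i) * G (s i * w) := by
        simpa using hG.simple_mul (cs.isLeftDescent_iff_not_isLeftDescent_mul.mp hi)
    _ = ∑ v ∈ univ.filter (BruhatLE cs · (s i * w)), (1 - S i) * ((-1) ^ ℓ v * F v) := by
        rw [ih, mul_sum]
    _ = _ := by
        simp only [hF.one_sub_mul_neg_one_pow_mul (hS i)]
        exact (cs.sum_bruhatLE_eq_of_isLeftDescent _ hi).symm
termination_by cs.length w
decreasing_by exact hi

end ReducedWordProd

end CoxeterSystem

theorem eps_T_inclusion_exclusion_general {n : ℕ} {W : Type*} [Group W] [Fintype W]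
    (M : CoxeterMatrix (Fin n)) (cs : CoxeterSystem M W)
    {A : Type*} [Ring A] (T : Fin n → A)
    (hidem : ∀ i, T i * T i = T i)
    (Tw Eps : W → A)
    (hTw : ∀ l : List (Fin n), cs.IsReduced l →
      Tw (cs.wordProd l) = (l.map T).prod)
    (hEps : ∀ l : List (Fin n), cs.IsReduced l →
      Eps (cs.wordProd l) = (l.map fun i => 1 - T i).prod) :
    ∀ w : W,
      Eps w = ∑ v ∈ Finset.univ.filter (fun v => BruhatLE cs v w),
          ((-1 : A) ^ cs.length v) * Tw v ∧
      Tw w = ∑ v ∈ Finset.univ.filter (fun v => BruhatLE cs v w),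
          ((-1 : A) ^ cs.length v) * Eps v := by
  intro w
  have hT : cs.IsReducedWordProd T Tw := hTw
  have hE : cs.IsReducedWordProd (fun i => 1 - T i) Eps := hEps
  have hT' : cs.IsReducedWordProd (fun i => 1 - (1 - T i)) Tw := by
    simpa only [sub_sub_cancel] using hT
  have hT_idem : ∀ i, IsIdempotentElem (T i) := hidem
  exact ⟨hT.eq_sum_bruhatLE hT_idem hE w, hE.eq_sum_bruhatLE (fun i => (hT_idem i).one_sub) hT' w⟩

/-- For `w` in a Weyl group `W` (presented as a Coxeter system `cs`),
with `T_w` the reduced-word products of the idempotent generators `T_i` and `ε_w`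
the reduced-word products of `ε_i = 1 − T_i` in the nil-Hecke algebra, one has
`ε_w = Σ_{v ≤ w} (−1)^{ℓ(v)} T_v` and `T_w = Σ_{v ≤ w} (−1)^{ℓ(v)} ε_v`,
where `≤` is the Bruhat order and `ℓ` the length function. -/
theorem eps_T_inclusion_exclusion {n : ℕ} {W : Type*} [Group W] [Fintype W]
    (M : CoxeterMatrix (Fin n)) (cs : CoxeterSystem M W)
    {A : Type*} [Ring A] (T : Fin n → A)
    (hidem : ∀ i, T i * T i = T i)
    (hbraid : ∀ i j, altProd (T i) (T j) (M.M i j) = altProd (T j) (T i) (M.M i j))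
    (Tw Eps : W → A)
    (hTw : ∀ l : List (Fin n), cs.IsReduced l →
      Tw (cs.wordProd l) = (l.map T).prod)
    (hEps : ∀ l : List (Fin n), cs.IsReduced l →
      Eps (cs.wordProd l) = (l.map fun i => 1 - T i).prod) :
    ∀ w : W,
      Eps w = ∑ v ∈ Finset.univ.filter (fun v => BruhatLE cs v w),
          ((-1 : A) ^ cs.length v) * Tw v ∧
      Tw w = ∑ v ∈ Finset.univ.filter (fun v => BruhatLE cs v w),
          ((-1 : A) ^ cs.length v) * Eps v :=
  eps_T_inclusion_exclusion_general M cs T hidem Tw Eps hTw hEps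
end
end

section
/- In Q ⊗_R K_T(G/B), there exist elements b_w, w ∈ W, satisfying X^λ b_w = e^{wλ} b_w for all λ ∈ P, given by b_1 = [O_{X_1}] and b_{ws_i} = τ_i b_w for ws_i > w, where τ_i = T_i − 1/(1 − X^{−α_i}); these b_w form a Q-basis of Q ⊗_R K_T(G/B). -/
/-!
By induction on length, every `w` has a simultaneous eigenvector of the `X^λ` with character
`e^{wλ}` that equals `[O_{X_w}]` modulo classes `[O_{X_v}]` with `ℓ(v) < ℓ(w)`. Indeed,
dividing the cross relation by `1 - X^{-α_i}` gives `X^λ τ_i = τ_i X^{s_i λ}`, so `τ_i` moves the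
character from `w` to `w s_i`; and unitriangularity survives because `T_i` raises length by at
most one while `1/(1 - X^{-α_i})` acts on an eigenvector by a scalar. Since `W` acts faithfully
on `P`, the characters are pairwise distinct, so these eigenvectors are linearly independent and,
by counting dimensions, a basis. In particular an eigenvector with a given character and leading
coefficient `1` is unique, which makes the recursion `b_{w s_i} = τ_i b_w` consistent.
-/

open scoped Classical TensorProduct

noncomputable section

theorem one_sub_dvd_one_sub_zpow {A : Type*} [CommRing A] (x : Aˣ) (m : ℤ) :
    (1 - x : A) ∣ 1 - ↑(x ^ m) := by
  induction m using Int.induction_on with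
  | zero => simp
  | succ m ih =>
    have : (1 - ↑(x ^ ((m : ℤ) + 1)) : A) = (1 - ↑(x ^ (m : ℤ))) + ↑(x ^ (m : ℤ)) * (1 - x) := by
      rw [zpow_add_one, Units.val_mul]; ring
    exact this ▸ dvd_add ih (dvd_mul_left _ _)
  | pred m ih =>
    have : (1 - ↑(x ^ (-(m : ℤ) - 1)) : A)
        = (1 - ↑(x ^ (-(m : ℤ)))) - ↑(x ^ (-(m : ℤ) - 1)) * (1 - x) := by
      rw [mul_sub, mul_one, ← Units.val_mul, ← zpow_add_one, sub_add_cancel]; ring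
    exact this ▸ dvd_sub ih (dvd_mul_left _ _)

theorem AddMonoidAlgebra.one_sub_single_neg_dvd_single_sub_single {k G : Type*} [CommRing k]
    [AddCommGroup G] (a b : G) (m : ℤ) :
    (1 - single (-a) 1 : AddMonoidAlgebra k G) ∣ single b 1 - single (b - m • a) 1 := by
  let x : (AddMonoidAlgebra k G)ˣ := (of k G).toHomUnits (Multiplicative.ofAdd (-a))
  have h := one_sub_dvd_one_sub_zpow x m
  simp only [x, ← map_zpow, MonoidHom.coe_toHomUnits, of_apply, toAdd_zpow, toAdd_ofAdd,
    smul_neg] at h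
  have : (single b 1 - single (b - m • a) 1 : AddMonoidAlgebra k G)
      = single b 1 * (1 - single (-(m • a)) 1) := by
    rw [mul_sub, mul_one, single_mul_single, mul_one, ← sub_eq_add_neg]
  exact this ▸ dvd_mul_of_dvd_right h _

theorem IsUnit.mul_eq_mul_of_mul_sub_eq_one {S : Type*} [Ring S] {u a b t τ : S} (hu : IsUnit u)
    (hτ : u * (t - τ) = 1) (hau : Commute a u) (h : u * (a * t - t * b) = a - b) :
    a * τ = τ * b := by
  obtain ⟨U, rfl⟩ := hu
  have hτ' : τ = t - ↑U⁻¹ := by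
    rw [Units.inv_eq_of_mul_eq_one_right hτ, sub_sub_cancel]
  have h' : a * t = t * b + (↑U⁻¹ * a - ↑U⁻¹ * b) := by
    rw [← sub_eq_iff_eq_add', ← mul_sub, ← h, ← mul_assoc, Units.inv_mul, one_mul]
  rw [hτ', mul_sub, sub_mul, hau.units_inv_right.eq, h']
  abel

theorem one_sub_mul_commutator_eq_sub {P A : Type*} [AddCommGroup P] [Ring A] (X : P → A)
    (hXadd : ∀ a b, X (a + b) = X a * X b) (hX0 : X 0 = 1) (t : A) {α lam mu : P}
    (hdvd : (1 - AddMonoidAlgebra.single (-α) 1 : AddMonoidAlgebra ℤ P) ∣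
      AddMonoidAlgebra.single lam 1 - AddMonoidAlgebra.single mu 1)
    (hcross : ∀ q : AddMonoidAlgebra ℤ P,
      AddMonoidAlgebra.single lam 1 - AddMonoidAlgebra.single mu 1
        = (1 - AddMonoidAlgebra.single (-α) 1) * q →
      X lam * t = t * X mu + q.coeff.sum fun ν c => c • X ν) :
    (1 - X (-α)) * (X lam * t - t * X mu) = X lam - X mu := by
  let Ψ := AddMonoidAlgebra.lift ℤ A P
    { toFun := fun g => X g.toAdd, map_one' := hX0, map_mul' := fun g h => hXadd _ _ }
  have hΨ : ∀ ν, Ψ (AddMonoidAlgebra.single ν 1) = X ν := fun ν => by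
    simp [Ψ, AddMonoidAlgebra.lift_single]
  obtain ⟨q, hq⟩ := hdvd
  have hΨq := congrArg Ψ hq
  rw [map_sub, map_mul, map_sub, map_one, hΨ, hΨ, hΨ] at hΨq
  rw [hcross q hq, add_sub_cancel_left, hΨq, AddMonoidAlgebra.lift_apply]
  rfl

theorem baseChange_mul_eq_mul_baseChange {P R Q K : Type*} [AddCommGroup P] [CommRing R]
    [CommRing Q] [Algebra R Q] [AddCommGroup K] [Module R K] (X : P → Module.End R K)
    (hXadd : ∀ a b, X (a + b) = X a * X b) {α lam mu : P} {t : Module.End R K}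
    (h : (1 - X (-α)) * (X lam * t - t * X mu) = X lam - X mu)
    {τ : Module.End Q (Q ⊗[R] K)} (hu : IsUnit (1 - (X (-α)).baseChange Q))
    (hτ : (1 - (X (-α)).baseChange Q) * (t.baseChange Q - τ) = 1) :
    (X lam).baseChange Q * τ = τ * (X mu).baseChange Q := by
  refine IsUnit.mul_eq_mul_of_mul_sub_eq_one (S := Module.End Q (Q ⊗[R] K)) hu hτ ?_ ?_
  · refine Commute.sub_right (R := Module.End Q (Q ⊗[R] K)) (Commute.one_right _) ?_
    rw [Commute, SemiconjBy, ← LinearMap.baseChange_mul, ← LinearMap.baseChange_mul, ← hXadd,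
      ← hXadd, add_comm]
  · simpa only [LinearMap.baseChange_mul, LinearMap.baseChange_sub, LinearMap.baseChange_one]
      using congrArg (LinearMap.baseChange Q) h

namespace Module.End

variable {K V : Type*} [Field K] [AddCommGroup V] [Module K V]

theorem apply_eq_inv_smul_of_mul_eq_one {u v : Module.End K V} (hu : IsUnit u) (huv : u * v = 1)
    {x : V} {c : K} (hx : u x = c • x) : v x = c⁻¹ • x := by
  obtain ⟨U, rfl⟩ := hu
  have hx' : c • v x = x := by
    rw [← map_smul, ← hx, ← Units.inv_eq_of_mul_eq_one_right huv, ← Module.End.mul_apply,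
      Units.inv_mul, Module.End.one_apply]
  rcases eq_or_ne c 0 with rfl | hc
  · rw [zero_smul] at hx'
    rw [← hx', map_zero, smul_zero]
  · rw [← smul_right_inj hc, smul_inv_smul₀ hc, hx']

theorem apply_eq_smul_of_mul_eq_mul {Λ : Type*} (X : Λ → Module.End K V) {f : Module.End K V}
    {σ : Λ → Λ} (hf : ∀ l, X l * f = f * X (σ l)) {χ : Λ → K} {x : V}
    (hx : ∀ l, X l x = χ l • x) (l : Λ) : X l (f x) = χ (σ l) • f x := by
  rw [← Module.End.mul_apply, hf, Module.End.mul_apply, hx, map_smul]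

theorem eigenvectors_linearIndependent_of_commute {ι Λ : Type*} (X : Λ → Module.End K V)
    (hX : ∀ a b, Commute (X a) (X b)) {χ : ι → Λ → K} (hχ : Function.Injective χ) {v : ι → V}
    (hv : ∀ i l, X l (v i) = χ i l • v i) (hv0 : ∀ i, v i ≠ 0) : LinearIndependent K v := by
  refine ((independent_iInf_maxGenEigenspace_of_forall_mapsTo X
    fun a b φ => mapsTo_maxGenEigenspace_of_comm (hX b a) φ).comp hχ).linearIndependent _
    (fun i => ?_) hv0
  simp only [Function.comp_apply, Submodule.mem_iInf]
  exact fun l => eigenspace_le_maxGenEigenspace (mem_eigenspace_iff.mpr (hv i l))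

theorem eq_basis_repr_smul_of_apply_eq_smul {ι Λ : Type*} [Fintype ι] (G : Module.Basis ι K V)
    (X : Λ → Module.End K V) {χ : ι → Λ → K} (hχ : Function.Injective χ)
    (hG : ∀ i l, X l (G i) = χ i l • G i) {y : V} {i : ι} (hy : ∀ l, X l y = χ i l • y) :
    y = G.repr y i • G i := by
  have hrepr : ∀ j l, χ j l * G.repr y j = χ i l * G.repr y j := by
    intro j l
    have h := congrArg (fun z => G.repr z j) (hy l)
    conv_lhs at h => rw [← G.sum_repr y, map_sum]
    simp only [map_smul, hG, smul_smul, G.repr_sum_self, Finsupp.smul_apply, smul_eq_mul] at h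
    rw [mul_comm, h]
  have hzero : ∀ j ≠ i, G.repr y j = 0 := by
    intro j hj
    obtain ⟨l, hl⟩ := Function.ne_iff.mp (hχ.ne hj)
    exact (mul_left_cancel₀ (sub_ne_zero.mpr hl)) (by rw [sub_mul, hrepr, sub_self, mul_zero])
  conv_lhs => rw [← G.sum_repr y]
  exact Finset.sum_eq_single i (fun j _ hj => by rw [hzero j hj, zero_smul])
    fun h => absurd (Finset.mem_univ i) h

end Module.End

namespace CoxeterSystem

variable {ι W : Type*} [Group W] {M : CoxeterMatrix ι} (cs : CoxeterSystem M W)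

theorem induction_on_length_lt_mul_simple {p : W → Prop} (one : p 1)
    (mul_simple : ∀ w i, cs.length w < cs.length (w * cs.simple i) → p w → p (w * cs.simple i))
    (w : W) : p w := by
  induction hn : cs.length w using Nat.strong_induction_on generalizing w with
  | _ n ih =>
    rcases eq_or_ne w 1 with rfl | hw
    · exact one
    obtain ⟨i, hi⟩ := cs.exists_rightDescent_of_ne_one hw
    have hi' : cs.length (w * cs.simple i) < cs.length (w * cs.simple i * cs.simple i) := by
      rw [mul_assoc, cs.simple_mul_simple_self, mul_one]; exact hi
    simpa [mul_assoc] using mul_simple _ i hi' (ih _ (hn ▸ hi) _ rfl)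

variable {K V : Type*} [Field K] [AddCommGroup V] [Module K V] (e : Module.Basis W K V)

def lengthFiltration (k : ℕ) : Submodule K V :=
  Submodule.span K (e '' {v | cs.length v < k})

def IsTriangularEigenvector {Λ : Type*} (X : Λ → Module.End K V) (χ : W → Λ → K) (w : W)
    (x : V) : Prop :=
  (∀ l, X l x = χ w l • x) ∧ x - e w ∈ cs.lengthFiltration e (cs.length w)

variable {cs e}

theorem lengthFiltration_mono {k l : ℕ} (h : k ≤ l) :
    cs.lengthFiltration e k ≤ cs.lengthFiltration e l :=
  Submodule.span_mono (Set.image_mono fun _ (hv : _ < k) => lt_of_lt_of_le hv h)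

theorem repr_self_eq_zero_of_mem_lengthFiltration {w : W} {x : V}
    (hx : x ∈ cs.lengthFiltration e (cs.length w)) : e.repr x w = 0 := by
  suffices cs.lengthFiltration e (cs.length w) ≤ LinearMap.ker (e.coord w) from this hx
  refine Submodule.span_le.mpr ?_
  rintro _ ⟨v, hv : cs.length v < cs.length w, rfl⟩
  have hvw : v ≠ w := by rintro rfl; exact lt_irrefl _ hv
  simp [hvw]

theorem sub_smul_sub_mem_lengthFiltration {T : Module.End K V} {i : ι}
    (hT : ∀ v, T (e v) =
      if cs.length v < cs.length (v * cs.simple i) then e (v * cs.simple i) else e v)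
    {w : W} (hw : cs.length w < cs.length (w * cs.simple i)) {x : V}
    (hx : x - e w ∈ cs.lengthFiltration e (cs.length w)) (c : K) :
    T x - c • x - e (w * cs.simple i) ∈ cs.lengthFiltration e (cs.length (w * cs.simple i)) := by
  have hlen : cs.length (w * cs.simple i) = cs.length w + 1 := by
    rcases cs.length_mul_simple w i with h | h <;> omega
  have hT_le : cs.lengthFiltration e (cs.length w)
      ≤ (cs.lengthFiltration e (cs.length w + 1)).comap T := by
    refine Submodule.span_le.mpr ?_
    rintro _ ⟨v, hv : cs.length v < cs.length w, rfl⟩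
    have hvs : cs.length (v * cs.simple i) ≤ cs.length v + 1 := by
      rcases cs.length_mul_simple v i with h | h <;> omega
    simp only [SetLike.mem_coe, Submodule.mem_comap, hT]
    split_ifs
    · exact Submodule.subset_span ⟨v * cs.simple i, show _ < cs.length w + 1 by omega, rfl⟩
    · exact Submodule.subset_span ⟨v, show _ < cs.length w + 1 by omega, rfl⟩
  have hx_mem : x ∈ cs.lengthFiltration e (cs.length w + 1) := by
    rw [← sub_add_cancel x (e w)]
    exact add_mem (lengthFiltration_mono (Nat.le_succ _) hx)
      (Submodule.subset_span ⟨w, Nat.lt_succ_self _, rfl⟩)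
  have hsplit : T x - c • x - e (w * cs.simple i) = T (x - e w) - c • x := by
    rw [map_sub, hT, if_pos hw]; abel
  rw [hsplit, hlen]
  exact sub_mem (hT_le hx) (Submodule.smul_mem _ c hx_mem)

theorem IsTriangularEigenvector.repr_self {Λ : Type*} {X : Λ → Module.End K V}
    {χ : W → Λ → K} {w : W} {x : V} (hx : cs.IsTriangularEigenvector e X χ w x) :
    e.repr x w = 1 := by
  have h := repr_self_eq_zero_of_mem_lengthFiltration hx.2
  rwa [map_sub, Finsupp.sub_apply, e.repr_self, Finsupp.single_eq_same, sub_eq_zero] at h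

variable (e)

theorem exists_eigenbasis_of_isTriangularEigenvector [Fintype W] {Λ : Type*}
    (X : Λ → Module.End K V) (hX : ∀ a b, Commute (X a) (X b)) {χ : W → Λ → K}
    (hχ : Function.Injective χ) (τ : ι → Module.End K V)
    (he : ∀ l, X l (e 1) = χ 1 l • e 1)
    (hτ : ∀ w i x, cs.length w < cs.length (w * cs.simple i) →
      cs.IsTriangularEigenvector e X χ w x →
      cs.IsTriangularEigenvector e X χ (w * cs.simple i) (τ i x)) :
    ∃ b : W → V, b 1 = e 1 ∧
      (∀ w i, cs.length w < cs.length (w * cs.simple i) → b (w * cs.simple i) = τ i (b w)) ∧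
      (∀ w l, X l (b w) = χ w l • b w) ∧
      LinearIndependent K b ∧ Submodule.span K (Set.range b) = ⊤ := by
  have he1 : cs.IsTriangularEigenvector e X χ 1 (e 1) := ⟨he, by simp⟩
  have hex : ∀ w, ∃ x, cs.IsTriangularEigenvector e X χ w x :=
    cs.induction_on_length_lt_mul_simple ⟨_, he1⟩ fun w i hw ⟨x, hx⟩ => ⟨_, hτ w i x hw hx⟩
  choose b hb using hex
  have hli : LinearIndependent K b :=
    Module.End.eigenvectors_linearIndependent_of_commute X hX hχ (fun w => (hb w).1)
      fun w h0 => by simpa [h0] using (hb w).repr_self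
  have : FiniteDimensional K V := .of_basis e
  have hspan : Submodule.span K (Set.range b) = ⊤ :=
    hli.span_eq_top_of_card_eq_finrank' (Module.finrank_eq_card_basis e).symm
  have huniq : ∀ {w x}, cs.IsTriangularEigenvector e X χ w x → x = b w := by
    intro w x hx
    let G := Module.Basis.mk hli hspan.ge
    have hx_eq := Module.End.eq_basis_repr_smul_of_apply_eq_smul G X hχ
      (by simpa [G] using fun w => (hb w).1) hx.1
    have hcoeff := congrArg (fun z => e.repr z w) hx_eq
    simp only [map_smul, Finsupp.smul_apply, hx.repr_self, G, Module.Basis.mk_apply,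
      (hb w).repr_self, smul_eq_mul, mul_one] at hcoeff
    rwa [← hcoeff, one_smul, Module.Basis.mk_apply] at hx_eq
  exact ⟨b, (huniq he1).symm, fun w i hw => (huniq (hτ w i _ hw (hb w))).symm,
    fun w => (hb w).1, hli, hspan⟩

end CoxeterSystem

theorem eigenbasis_exists_general
    {n : ℕ} {W : Type*} [Group W] [Fintype W]
    (M : CoxeterMatrix (Fin n)) (cs : CoxeterSystem M W)
    {P : Type*} [AddCommGroup P]
    (wt : Module.Basis (Fin n) ℤ P) (alpha : Fin n → P)
    (sact : W →* Multiplicative (AddAut P))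
    (hact : ∀ (i : Fin n) (lam : P),
      Multiplicative.toAdd (sact (cs.simple i)) lam = lam - wt.repr lam i • alpha i)
    (hinj : Function.Injective sact)
    (K : Type*) [AddCommGroup K] [Module (AddMonoidAlgebra ℤ P) K]
    (O : W → K)
    (hbasis : ∃ b : Module.Basis W (AddMonoidAlgebra ℤ P) K, ∀ w, b w = O w)
    (Ti : Fin n → Module.End (AddMonoidAlgebra ℤ P) K)
    (hTi : ∀ (i : Fin n) (w : W), Ti i (O w) =
      if cs.length w < cs.length (w * cs.simple i) then O (w * cs.simple i) else O w)
    (Xop : P → Module.End (AddMonoidAlgebra ℤ P) K)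
    (hXadd : ∀ lam mu, Xop (lam + mu) = Xop lam * Xop mu)
    (hX0 : Xop 0 = 1)
    (hXO1 : ∀ lam, Xop lam (O 1) = (AddMonoidAlgebra.single lam 1 : AddMonoidAlgebra ℤ P) • O 1)
    (hcross : ∀ (i : Fin n) (lam : P) (q : AddMonoidAlgebra ℤ P),
      ((AddMonoidAlgebra.single lam 1 : AddMonoidAlgebra ℤ P)
          - AddMonoidAlgebra.single (lam - wt.repr lam i • alpha i) 1
        = (1 - AddMonoidAlgebra.single (-(alpha i)) 1) * q) →
      Xop lam * Ti i = Ti i * Xop (lam - wt.repr lam i • alpha i)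
        + q.coeff.sum (fun mu c => c • Xop mu))
    (Q : Type*) [Field Q] [Algebra (AddMonoidAlgebra ℤ P) Q]
    [IsFractionRing (AddMonoidAlgebra ℤ P) Q]
    (tau : Fin n → Module.End Q (Q ⊗[AddMonoidAlgebra ℤ P] K))
    (hu : ∀ i, IsUnit ((1 : Module.End Q (Q ⊗[AddMonoidAlgebra ℤ P] K))
        - LinearMap.baseChange Q (Xop (-(alpha i)))))
    (htau : ∀ i, ((1 : Module.End Q (Q ⊗[AddMonoidAlgebra ℤ P] K))
        - LinearMap.baseChange Q (Xop (-(alpha i))))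
        * (LinearMap.baseChange Q (Ti i) - tau i) = 1)
    :
    ∃ b : W → Q ⊗[AddMonoidAlgebra ℤ P] K,
      b 1 = (1 : Q) ⊗ₜ O 1 ∧
      (∀ (w : W) (i : Fin n), cs.length w < cs.length (w * cs.simple i) →
        b (w * cs.simple i) = tau i (b w)) ∧
      (∀ (w : W) (lam : P),
        LinearMap.baseChange Q (Xop lam) (b w)
          = algebraMap (AddMonoidAlgebra ℤ P) Q
              (AddMonoidAlgebra.single (Multiplicative.toAdd (sact w) lam) 1) • b w) ∧
      LinearIndependent Q b ∧
      Submodule.span Q (Set.range b) = ⊤ := by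
  obtain ⟨b₀, hb₀⟩ := hbasis
  let e := Algebra.TensorProduct.basis Q b₀
  have he : ∀ w, e w = (1 : Q) ⊗ₜ O w := fun w => by simp [e, hb₀]
  let X : P → Module.End Q (Q ⊗[AddMonoidAlgebra ℤ P] K) := fun lam => (Xop lam).baseChange Q
  have hX : ∀ a b, Commute (X a) (X b) := fun a b => by
    simp only [Commute, SemiconjBy, X, ← LinearMap.baseChange_mul, ← hXadd, add_comm]
  let χ : W → P → Q := fun w lam => algebraMap (AddMonoidAlgebra ℤ P) Q
    (AddMonoidAlgebra.single (Multiplicative.toAdd (sact w) lam) 1)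
  have hχ : Function.Injective χ := fun v w hvw => hinj <| AddEquiv.ext fun lam =>
    AddMonoidAlgebra.single_left_injective one_ne_zero <|
      IsFractionRing.injective (AddMonoidAlgebra ℤ P) Q (congrFun hvw lam)
  have hXτ : ∀ i lam, X lam * tau i = tau i * X (Multiplicative.toAdd (sact (cs.simple i)) lam) :=
    fun i lam => hact i lam ▸ baseChange_mul_eq_mul_baseChange Xop hXadd
      (one_sub_mul_commutator_eq_sub Xop hXadd hX0 (Ti i)
        (AddMonoidAlgebra.one_sub_single_neg_dvd_single_sub_single _ _ _) (hcross i lam))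
      (hu i) (htau i)
  have hT : ∀ i v, (Ti i).baseChange Q (e v) =
      if cs.length v < cs.length (v * cs.simple i) then e (v * cs.simple i) else e v := by
    intro i v
    rw [he, LinearMap.baseChange_tmul, hTi]
    split_ifs <;> simp only [he]
  have he1 : ∀ lam, X lam (e 1) = χ 1 lam • e 1 := by
    intro lam
    rw [he, LinearMap.baseChange_tmul, hXO1, TensorProduct.tmul_smul, ← algebraMap_smul Q]
    simp [χ]
  obtain ⟨b, hb1, hbτ, hbX, hli, hspan⟩ :=
    cs.exists_eigenbasis_of_isTriangularEigenvector e X hX hχ tau he1 fun w i x hw hx => by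
      refine ⟨fun lam => ?_, ?_⟩
      · rw [Module.End.apply_eq_smul_of_mul_eq_mul X (hXτ i) hx.1 lam]
        simp only [χ, map_mul]
        rfl
      · have hux : (1 - X (-alpha i)) x = (1 - χ w (-alpha i)) • x := by
          rw [LinearMap.sub_apply, Module.End.one_apply, hx.1,
            sub_smul (M := Q ⊗[AddMonoidAlgebra ℤ P] K), one_smul]
        rw [← sub_sub_cancel ((Ti i).baseChange Q) (tau i), LinearMap.sub_apply,
          Module.End.apply_eq_inv_smul_of_mul_eq_one (hu i) (htau i) hux]
        exact CoxeterSystem.sub_smul_sub_mem_lengthFiltration (hT i) hw hx.2 _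
  exact ⟨b, hb1.trans (he 1), hbτ, hbX, hli, hspan⟩

/-- In `Q ⊗_R K_T(G/B)` there exist elements `b_w`, `w ∈ W`, with
`X^λ b_w = e^{wλ} b_w` for all `λ ∈ P`, given by `b_1 = [O_{X_1}]` and
`b_{w s_i} = τ_i b_w` for `w s_i > w`, where `τ_i = T_i − 1/(1 − X^{−α_i})`; and these
`b_w` form a `Q`-basis of `Q ⊗_R K_T(G/B)`. -/
theorem eigenbasis_exists
    {n : ℕ} {W : Type*} [Group W] [Fintype W]
    (M : CoxeterMatrix (Fin n)) (cs : CoxeterSystem M W)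
    {P : Type*} [AddCommGroup P]
    (wt : Module.Basis (Fin n) ℤ P) (alpha : Fin n → P)
    (sact : W →* Multiplicative (AddAut P))
    (hact : ∀ (i : Fin n) (lam : P),
      Multiplicative.toAdd (sact (cs.simple i)) lam = lam - wt.repr lam i • alpha i)
    (hcart : ∀ i, wt.repr (alpha i) i = 2)
    (hinj : Function.Injective sact)
    (K : Type*) [AddCommGroup K] [Module (AddMonoidAlgebra ℤ P) K]
    (O : W → K)
    (hbasis : ∃ b : Module.Basis W (AddMonoidAlgebra ℤ P) K, ∀ w, b w = O w)
    (Ti : Fin n → Module.End (AddMonoidAlgebra ℤ P) K)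
    (hTi : ∀ (i : Fin n) (w : W), Ti i (O w) =
      if cs.length w < cs.length (w * cs.simple i) then O (w * cs.simple i) else O w)
    (Xop : P → Module.End (AddMonoidAlgebra ℤ P) K)
    (hXadd : ∀ lam mu, Xop (lam + mu) = Xop lam * Xop mu)
    (hX0 : Xop 0 = 1)
    (hXO1 : ∀ lam, Xop lam (O 1) = (AddMonoidAlgebra.single lam 1 : AddMonoidAlgebra ℤ P) • O 1)
    (hcross : ∀ (i : Fin n) (lam : P) (q : AddMonoidAlgebra ℤ P),
      ((AddMonoidAlgebra.single lam 1 : AddMonoidAlgebra ℤ P)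
          - AddMonoidAlgebra.single (lam - wt.repr lam i • alpha i) 1
        = (1 - AddMonoidAlgebra.single (-(alpha i)) 1) * q) →
      Xop lam * Ti i = Ti i * Xop (lam - wt.repr lam i • alpha i)
        + q.coeff.sum (fun mu c => c • Xop mu))
    (Q : Type*) [Field Q] [Algebra (AddMonoidAlgebra ℤ P) Q]
    [IsFractionRing (AddMonoidAlgebra ℤ P) Q]
    (tau : Fin n → Module.End Q (Q ⊗[AddMonoidAlgebra ℤ P] K))
    (hu : ∀ i, IsUnit ((1 : Module.End Q (Q ⊗[AddMonoidAlgebra ℤ P] K))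
        - LinearMap.baseChange Q (Xop (-(alpha i)))))
    (htau : ∀ i, ((1 : Module.End Q (Q ⊗[AddMonoidAlgebra ℤ P] K))
        - LinearMap.baseChange Q (Xop (-(alpha i))))
        * (LinearMap.baseChange Q (Ti i) - tau i) = 1)
    :
    ∃ b : W → Q ⊗[AddMonoidAlgebra ℤ P] K,
      b 1 = (1 : Q) ⊗ₜ O 1 ∧
      (∀ (w : W) (i : Fin n), cs.length w < cs.length (w * cs.simple i) →
        b (w * cs.simple i) = tau i (b w)) ∧
      (∀ (w : W) (lam : P),
        LinearMap.baseChange Q (Xop lam) (b w)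
          = algebraMap (AddMonoidAlgebra ℤ P) Q
              (AddMonoidAlgebra.single (Multiplicative.toAdd (sact w) lam) 1) • b w) ∧
      LinearIndependent Q b ∧
      Submodule.span Q (Set.range b) = ⊤ :=
  eigenbasis_exists_general M cs wt alpha sact hact hinj K O hbasis Ti hTi Xop hXadd hX0 hXO1 hcross
    Q tau hu htau
end
end

section
/- In K_T(G/B) for the root system of type A_2, the Schubert class products [s_1 s_2][s_2 s_1] = −[O_{X_1}] + [O_{X_{s_1}}] + [O_{X_{s_2}}] and [s_2 s_1]² = e^{−α_1}[O_{X_{s_1}}] − (e^{−α_1} − 1)[O_{X_{s_2 s_1}}] hold, where [w] denotes [O_{X_w}]. -/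
open scoped Classical TensorProduct

noncomputable section

/-!
Write `ω_i` for `wt i`. Since `m₀₁ = 3`, the longest element is `w₀ = s₀s₁s₀ = s₁s₀s₁`, and
`[w₀]` is the unit. Pushing `X_{-ω_i}` down the chain `1 → s_i → s_is_j → w₀` with the
Bernstein relation (each step has pairing `0` or `-1`, so the quotient is explicit) gives
`e^{-ω_j} X_{-ω_i} [w₀] = [w₀] - [s_is_j]`. Multiplication is linear and commutes with the
`X_λ`, so multiplying by `[s_is_j]` is `y ↦ y - e^{-ω_j} X_{-ω_i} y`, and both products come
down to computing `X_{-ω_0} [s₁s₀]` and `X_{-ω_1} [s₁s₀]` along the same chain.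
-/

theorem Fin.eq_or_eq_of_ne {i j : Fin 2} (hij : i ≠ j) (k : Fin 2) : k = i ∨ k = j := by
  omega

namespace CoxeterSystem

section

variable {B W : Type*} [Group W] {M : CoxeterMatrix B} (cs : CoxeterSystem M W) {i j : B}

theorem simple_mul_simple_mul_simple_eq (hM : M i j = 3) :
    cs.simple i * cs.simple j * cs.simple i = cs.simple j * cs.simple i * cs.simple j := by
  have h := cs.wordProd_braidWord_eq i j
  rw [braidWord, braidWord, hM, M.symmetric j i, hM] at h
  simpa [alternatingWord, wordProd, mul_assoc] using h.symm

theorem simple_mul_simple_ne_one (hij : cs.simple i ≠ cs.simple j) :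
    cs.simple i * cs.simple j ≠ 1 := by
  rwa [Ne, mul_eq_one_iff_eq_inv, cs.inv_simple]

theorem length_simple_mul_simple (hij : cs.simple i ≠ cs.simple j) :
    cs.length (cs.simple i * cs.simple j) = 2 := by
  have hle := cs.length_mul_le (cs.simple i) (cs.simple j)
  have hmod := cs.length_mul_mod_two (cs.simple i) (cs.simple j)
  have hne : cs.length (cs.simple i * cs.simple j) ≠ 0 :=
    cs.length_eq_zero_iff.not.mpr (cs.simple_mul_simple_ne_one hij)
  simp only [cs.length_simple] at hle hmod
  omega

theorem simple_ne_simple_of_reflection {P : Type*} [AddCommGroup P] {wt : Module.Basis B ℤ P}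
    {alpha : B → P} (sact : W →* Multiplicative (AddAut P))
    (hact : ∀ (i : B) (lam : P),
      Multiplicative.toAdd (sact (cs.simple i)) lam = lam - wt.repr lam i • alpha i)
    (hij : i ≠ j) (hα : alpha i ≠ 0) : cs.simple i ≠ cs.simple j := by
  intro h
  have hwt := congrArg (fun w => Multiplicative.toAdd (sact w) (wt i)) h
  simp [hact, hij] at hwt
  exact hα hwt

end

section RankTwo

variable {W : Type*} [Group W] {M : CoxeterMatrix (Fin 2)} (cs : CoxeterSystem M W) {i j : Fin 2}

theorem length_simple_mul_simple_mul_simple (hM : M i j = 3) (hij : cs.simple i ≠ cs.simple j) :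
    cs.length (cs.simple i * cs.simple j * cs.simple i) = 3 := by
  have hle := cs.length_mul_le (cs.simple i * cs.simple j) (cs.simple i)
  have hmod := cs.length_mul_mod_two (cs.simple i * cs.simple j) (cs.simple i)
  have hne : cs.length (cs.simple i * cs.simple j * cs.simple i) ≠ 1 := by
    rw [Ne, cs.length_eq_one_iff]
    rintro ⟨k, hk⟩
    apply cs.simple_mul_simple_ne_one hij
    rcases Fin.eq_or_eq_of_ne (ne_of_apply_ne cs.simple hij) k with rfl | rfl
    · simpa using hk
    · have hsq : (cs.simple i * cs.simple k) ^ 2 = 1 := by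
        rw [sq, ← mul_assoc, hk, cs.simple_mul_simple_self]
      have hcube := cs.simple_mul_simple_pow i k
      rwa [hM, pow_succ, hsq, one_mul] at hcube
  simp only [cs.length_simple, cs.length_simple_mul_simple hij] at hle hmod
  omega

theorem eq_alternating_of_M_eq_three (hM : M i j = 3) (hij : cs.simple i ≠ cs.simple j) (w : W) :
    w = 1 ∨ w = cs.simple i ∨ w = cs.simple j ∨ w = cs.simple i * cs.simple j ∨
      w = cs.simple j * cs.simple i ∨ w = cs.simple i * cs.simple j * cs.simple i := by
  have braid := cs.simple_mul_simple_mul_simple_eq hM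
  induction w using cs.simple_induction_right with
  | one => simp
  | mul_simple_right w k ih =>
    rcases Fin.eq_or_eq_of_ne (ne_of_apply_ne cs.simple hij) k with rfl | rfl <;>
    rcases ih with rfl | rfl | rfl | rfl | rfl | rfl <;>
    simp [mul_assoc, braid]

theorem eq_simple_mul_simple_mul_simple_of_forall_length_le (hM : M i j = 3)
    (hij : cs.simple i ≠ cs.simple j) {w₀ : W} (hw₀ : ∀ w, cs.length w ≤ cs.length w₀) :
    w₀ = cs.simple i * cs.simple j * cs.simple i := by
  have h3 := hw₀ (cs.simple i * cs.simple j * cs.simple i)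
  rw [cs.length_simple_mul_simple_mul_simple hM hij] at h3
  have hji : cs.simple j ≠ cs.simple i := hij.symm
  rcases cs.eq_alternating_of_M_eq_three hM hij w₀ with rfl | rfl | rfl | rfl | rfl | rfl <;>
    simp_all [cs.length_simple_mul_simple]

end RankTwo

end CoxeterSystem

local notation "𝕖" lam:max => (AddMonoidAlgebra.single lam (1 : ℤ) : AddMonoidAlgebra ℤ _)

section Bernstein

variable {P K : Type*} [AddCommGroup P] [AddCommGroup K] [Module (AddMonoidAlgebra ℤ P) K]

theorem AddMonoidAlgebra.single_smul_single_smul (a b : P) (x : K) :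
    𝕖 a • 𝕖 b • x = 𝕖 (a + b) • x := by
  rw [smul_smul, AddMonoidAlgebra.single_mul_single, one_mul]

theorem AddMonoidAlgebra.single_neg_smul_single_smul (a : P) (x : K) : 𝕖 (-a) • 𝕖 a • x = x := by
  rw [AddMonoidAlgebra.single_smul_single_smul, neg_add_cancel, ← AddMonoidAlgebra.one_def,
    one_smul]

/-- `X_λ T = T X_{λ - c(λ) a} + (X_λ - X_{λ - c(λ) a}) / (1 - X_{-a})`: the quotient
`(e^λ - e^{λ - c(λ) a}) / (1 - e^{-a})` is passed as any `q` solving the division. -/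
def BernsteinRelation (T : Module.End (AddMonoidAlgebra ℤ P) K)
    (X : P → Module.End (AddMonoidAlgebra ℤ P) K) (c : P → ℤ) (a : P) : Prop :=
  ∀ (lam : P) (q : AddMonoidAlgebra ℤ P), 𝕖 lam - 𝕖 (lam - c lam • a) = (1 - 𝕖 (-a)) * q →
    X lam * T = T * X (lam - c lam • a) + q.coeff.sum (fun mu n => n • X mu)

namespace BernsteinRelation

variable {T : Module.End (AddMonoidAlgebra ℤ P) K} {X : P → Module.End (AddMonoidAlgebra ℤ P) K}
  {c : P → ℤ} {a lam : P}

theorem apply_of_eq_zero (h : BernsteinRelation T X c a) (hc : c lam = 0) (x : K) :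
    X lam (T x) = T (X lam x) := by
  have hcomm := h lam 0 (by simp [hc])
  simp only [hc, zero_smul, sub_zero, AddMonoidAlgebra.coeff_zero, Finsupp.sum_zero_index,
    add_zero] at hcomm
  exact LinearMap.congr_fun hcomm x

theorem apply_of_eq_neg_one (h : BernsteinRelation T X c a) (hc : c lam = -1) (x : K) :
    X lam (T x) = T (X (lam + a) x) - X (lam + a) x := by
  have hshift : lam - c lam • a = lam + a := by rw [hc, neg_one_zsmul, sub_neg_eq_add]
  have hquot : 𝕖 lam - 𝕖 (lam - c lam • a)
      = (1 - 𝕖 (-a)) * AddMonoidAlgebra.single (lam + a) (-1) := by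
    rw [hshift, sub_mul, one_mul, AddMonoidAlgebra.single_mul_single, neg_add_cancel_comm_assoc,
      one_mul, AddMonoidAlgebra.single_neg, AddMonoidAlgebra.single_neg]
    abel
  have hcomm := h lam _ hquot
  rw [hshift, AddMonoidAlgebra.coeff_single, Finsupp.sum_single_index (by simp), neg_one_zsmul,
    ← sub_eq_add_neg] at hcomm
  exact LinearMap.congr_fun hcomm x

end BernsteinRelation

end Bernstein

theorem root_eq_two_smul_sub_of_cartan_A2 {P : Type*} [AddCommGroup P]
    {wt : Module.Basis (Fin 2) ℤ P} {alpha : Fin 2 → P}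
    (hcartan : ∀ i j : Fin 2, wt.repr (alpha i) j = if i = j then 2 else -1)
    {i j : Fin 2} (hij : i ≠ j) : alpha i = 2 • wt i - wt j := by
  refine wt.ext_elem fun k => ?_
  rcases Fin.eq_or_eq_of_ne hij k with rfl | rfl <;>
    simp [hcartan, hij, hij.symm]

section SchubertClasses

variable {W : Type*} [Group W] {M : CoxeterMatrix (Fin 2)} {cs : CoxeterSystem M W}
  {P K : Type*} [AddCommGroup P] [AddCommGroup K] [Module (AddMonoidAlgebra ℤ P) K]
  {O : W → K} {Ti : Fin 2 → Module.End (AddMonoidAlgebra ℤ P) K} {i j : Fin 2}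

variable (hTi : ∀ (i : Fin 2) (w : W), Ti i (O w) =
  if cs.length w < cs.length (w * cs.simple i) then O (w * cs.simple i) else O w)
include hTi

theorem Ti_O_one : Ti i (O 1) = O (cs.simple i) := by
  rw [hTi, if_pos (by simp), one_mul]

theorem Ti_O_simple_self : Ti i (O (cs.simple i)) = O (cs.simple i) := by
  rw [hTi, if_neg (by simp)]

theorem Ti_O_simple (hij : cs.simple i ≠ cs.simple j) :
    Ti j (O (cs.simple i)) = O (cs.simple i * cs.simple j) := by
  rw [hTi, if_pos (by simp [cs.length_simple_mul_simple hij])]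

theorem Ti_O_simple_mul_simple (hM : M i j = 3) (hij : cs.simple i ≠ cs.simple j) :
    Ti i (O (cs.simple i * cs.simple j)) = O (cs.simple i * cs.simple j * cs.simple i) := by
  rw [hTi, if_pos (by simp [cs.length_simple_mul_simple hij,
    cs.length_simple_mul_simple_mul_simple hM hij])]

variable {wt : Module.Basis (Fin 2) ℤ P} {alpha : Fin 2 → P}
  {Xop : P → Module.End (AddMonoidAlgebra ℤ P) K}
  (hB : ∀ i, BernsteinRelation (Ti i) Xop (fun lam => wt.repr lam i) (alpha i))
  (hXO1 : ∀ lam, Xop lam (O 1) = 𝕖 lam • O 1)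
include hB hXO1

theorem Xop_O_simple_of_repr_eq_zero {lam : P} (h : wt.repr lam i = 0) :
    Xop lam (O (cs.simple i)) = 𝕖 lam • O (cs.simple i) := by
  rw [← Ti_O_one hTi, (hB i).apply_of_eq_zero h, hXO1, map_smul]

theorem Xop_O_simple_of_repr_eq_neg_one {lam : P} (h : wt.repr lam i = -1) :
    Xop lam (O (cs.simple i)) = 𝕖 (lam + alpha i) • (O (cs.simple i) - O 1) := by
  rw [← Ti_O_one hTi, (hB i).apply_of_eq_neg_one h, hXO1, map_smul, Ti_O_one hTi, smul_sub]

variable (hcartan : ∀ i j : Fin 2, wt.repr (alpha i) j = if i = j then 2 else -1)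
include hcartan

theorem Xop_sub_O_simple_mul_simple (hij : cs.simple i ≠ cs.simple j) :
    Xop (wt i - wt j) (O (cs.simple i * cs.simple j))
      = 𝕖 (wt j) • (O (cs.simple i * cs.simple j) - O (cs.simple i)) := by
  have hij' : i ≠ j := ne_of_apply_ne cs.simple hij
  have hshift : wt i - wt j + alpha j = wt j := by
    rw [root_eq_two_smul_sub_of_cartan_A2 hcartan hij'.symm]; abel
  rw [← Ti_O_simple hTi hij, (hB j).apply_of_eq_neg_one (by simp [hij']), hshift,
    Xop_O_simple_of_repr_eq_zero hTi hB hXO1 (by simp [hij'.symm]), map_smul,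
    Ti_O_simple hTi hij, smul_sub]

theorem smul_Xop_neg_O_longest (hM : M i j = 3) (hij : cs.simple i ≠ cs.simple j) :
    𝕖 (-wt j) • Xop (-wt i) (O (cs.simple i * cs.simple j * cs.simple i))
      = O (cs.simple i * cs.simple j * cs.simple i) - O (cs.simple i * cs.simple j) := by
  have hij' : i ≠ j := ne_of_apply_ne cs.simple hij
  have hshift : -wt i + alpha i = wt i - wt j := by
    rw [root_eq_two_smul_sub_of_cartan_A2 hcartan hij']; abel
  rw [← Ti_O_simple_mul_simple hTi hM hij, (hB i).apply_of_eq_neg_one (by simp), hshift,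
    Xop_sub_O_simple_mul_simple hTi hB hXO1 hcartan hij, map_smul, map_sub,
    Ti_O_simple_mul_simple hTi hM hij, Ti_O_simple_self hTi, ← smul_sub,
    AddMonoidAlgebra.single_neg_smul_single_smul]
  abel

theorem Xop_neg_right_O_simple_mul_simple (hij : cs.simple i ≠ cs.simple j) :
    Xop (-wt i) (O (cs.simple j * cs.simple i))
      = 𝕖 (wt j) • (O (cs.simple j * cs.simple i) - O (cs.simple i) - O (cs.simple j) + O 1) := by
  have hij' : i ≠ j := ne_of_apply_ne cs.simple hij
  have hshift : -wt i + alpha i = wt i - wt j := by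
    rw [root_eq_two_smul_sub_of_cartan_A2 hcartan hij']; abel
  have hshift' : wt i - wt j + alpha j = wt j := by
    rw [root_eq_two_smul_sub_of_cartan_A2 hcartan hij'.symm]; abel
  rw [← Ti_O_simple hTi hij.symm, (hB i).apply_of_eq_neg_one (by simp), hshift,
    Xop_O_simple_of_repr_eq_neg_one hTi hB hXO1 (by simp [hij']), hshift', map_smul, map_sub,
    Ti_O_simple hTi hij.symm, Ti_O_one hTi]
  module

theorem Xop_neg_left_O_simple_mul_simple (hij : cs.simple i ≠ cs.simple j) :
    Xop (-wt j) (O (cs.simple j * cs.simple i))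
      = 𝕖 (wt j - wt i) • (O (cs.simple j * cs.simple i) - O (cs.simple i)) := by
  have hij' : i ≠ j := ne_of_apply_ne cs.simple hij
  have hshift : -wt j + alpha j = wt j - wt i := by
    rw [root_eq_two_smul_sub_of_cartan_A2 hcartan hij'.symm]; abel
  rw [← Ti_O_simple hTi hij.symm, (hB i).apply_of_eq_zero (by simp [hij'.symm]),
    Xop_O_simple_of_repr_eq_neg_one hTi hB hXO1 (by simp), hshift, map_smul, map_sub,
    Ti_O_simple hTi hij.symm, Ti_O_one hTi]

end SchubertClasses

theorem mul_eq_sub_smul_of_smul_eq_sub {R K : Type*} [Ring R] [AddCommGroup K] [Module R K]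
    {mul : K → K → K} {f : K → K} {u a : K} {r : R} (hmul_one : ∀ x, mul u x = x)
    (hmul_add : ∀ x y z, mul (x + y) z = mul x z + mul y z)
    (hmul_smul : ∀ (r : R) (x y : K), mul (r • x) y = r • mul x y)
    (hmul_f : ∀ x y, mul (f x) y = f (mul x y)) (ha : r • f u = u - a) (y : K) :
    mul a y = y - r • f y := by
  obtain rfl : a = u + (-r) • f u := by rw [neg_smul, ha]; abel
  rw [hmul_add, hmul_smul, hmul_f, hmul_one, neg_smul, ← sub_eq_add_neg]

theorem schubert_products_A2_general
    {W : Type*} [Group W]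
    (M : CoxeterMatrix (Fin 2)) (cs : CoxeterSystem M W)
    {P : Type*} [AddCommGroup P]
    (wt : Module.Basis (Fin 2) ℤ P) (alpha : Fin 2 → P)
    (sact : W →* Multiplicative (AddAut P))
    (hact : ∀ (i : Fin 2) (lam : P),
      Multiplicative.toAdd (sact (cs.simple i)) lam = lam - wt.repr lam i • alpha i)
    (K : Type*) [AddCommGroup K] [Module (AddMonoidAlgebra ℤ P) K]
    (O : W → K)
    (Ti : Fin 2 → Module.End (AddMonoidAlgebra ℤ P) K)
    (hTi : ∀ (i : Fin 2) (w : W), Ti i (O w) =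
      if cs.length w < cs.length (w * cs.simple i) then O (w * cs.simple i) else O w)
    (Xop : P → Module.End (AddMonoidAlgebra ℤ P) K)
    (hXO1 : ∀ lam, Xop lam (O 1) = (AddMonoidAlgebra.single lam 1 : AddMonoidAlgebra ℤ P) • O 1)
    (hcross : ∀ (i : Fin 2) (lam : P) (q : AddMonoidAlgebra ℤ P),
      ((AddMonoidAlgebra.single lam 1 : AddMonoidAlgebra ℤ P)
          - AddMonoidAlgebra.single (lam - wt.repr lam i • alpha i) 1
        = (1 - AddMonoidAlgebra.single (-(alpha i)) 1) * q) →
      Xop lam * Ti i = Ti i * Xop (lam - wt.repr lam i • alpha i)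
        + q.coeff.sum (fun mu c => c • Xop mu))
    (hA2 : M.M 0 1 = 3)
    (hcartan : ∀ i j : Fin 2, wt.repr (alpha i) j = if i = j then 2 else -1)
    (w0 : W) (hw0 : ∀ w : W, cs.length w ≤ cs.length w0)
    (mul : K → K → K)
    (hmul_one : ∀ x, mul (O w0) x = x)
    (hmul_add : ∀ x y z, mul (x + y) z = mul x z + mul y z)
    (hmul_smul : ∀ (r : AddMonoidAlgebra ℤ P) (x y : K),
      mul (r • x) y = r • mul x y)
    (hmul_X : ∀ (lam : P) (x y : K), mul (Xop lam x) y = Xop lam (mul x y)) :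
    mul (O (cs.simple 0 * cs.simple 1)) (O (cs.simple 1 * cs.simple 0))
        = - O 1 + O (cs.simple 0) + O (cs.simple 1) ∧
    mul (O (cs.simple 1 * cs.simple 0)) (O (cs.simple 1 * cs.simple 0))
        = (AddMonoidAlgebra.single (-(alpha 0)) 1 : AddMonoidAlgebra ℤ P) •
            O (cs.simple 0)
          - ((AddMonoidAlgebra.single (-(alpha 0)) 1 : AddMonoidAlgebra ℤ P) - 1) •
            O (cs.simple 1 * cs.simple 0) := by
  have hα : alpha 0 ≠ 0 := fun h => by simpa [h] using hcartan 0 0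
  have hne : cs.simple 0 ≠ cs.simple 1 :=
    cs.simple_ne_simple_of_reflection sact hact (by decide) hα
  have hA2' : M.M 1 0 = 3 := M.symmetric 0 1 ▸ hA2
  obtain rfl := cs.eq_simple_mul_simple_mul_simple_of_forall_length_le hA2 hne hw0
  have mul_s0s1 := mul_eq_sub_smul_of_smul_eq_sub hmul_one hmul_add hmul_smul (hmul_X _)
    (smul_Xop_neg_O_longest hTi hcross hXO1 hcartan hA2 hne)
  have mul_s1s0 := mul_eq_sub_smul_of_smul_eq_sub
    (cs.simple_mul_simple_mul_simple_eq hA2 ▸ hmul_one) hmul_add hmul_smul (hmul_X _)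
    (smul_Xop_neg_O_longest hTi hcross hXO1 hcartan hA2' hne.symm)
  have hroot : -wt 0 + (wt 1 - wt 0) = -alpha 0 := by
    rw [root_eq_two_smul_sub_of_cartan_A2 hcartan (by decide : (0 : Fin 2) ≠ 1)]; abel
  constructor
  · rw [mul_s0s1, Xop_neg_right_O_simple_mul_simple hTi hcross hXO1 hcartan hne,
      AddMonoidAlgebra.single_neg_smul_single_smul]
    abel
  · rw [mul_s1s0, Xop_neg_left_O_simple_mul_simple hTi hcross hXO1 hcartan hne,
      AddMonoidAlgebra.single_smul_single_smul, hroot]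
    module

/-- In `K_T(G/B)` for the root system of type `A_2` (Coxeter matrix
with `m_{12} = 3`, Cartan matrix `(2, −1; −1, 2)`), the Schubert class products
`[s_1s_2][s_2s_1] = −[O_{X_1}] + [O_{X_{s_1}}] + [O_{X_{s_2}}]` and
`[s_2s_1]² = e^{−α_1}[O_{X_{s_1}}] − (e^{−α_1} − 1)[O_{X_{s_2s_1}}]`
hold, where `[w] = [O_{X_w}]` and multiplication is the ring structure of
`K_T(G/B)` with identity `[O_{X_{w_0}}]`. -/
theorem schubert_products_A2
    {W : Type*} [Group W] [Fintype W]
    (M : CoxeterMatrix (Fin 2)) (cs : CoxeterSystem M W)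
    {P : Type*} [AddCommGroup P]
    (wt : Module.Basis (Fin 2) ℤ P) (alpha : Fin 2 → P)
    (sact : W →* Multiplicative (AddAut P))
    (hact : ∀ (i : Fin 2) (lam : P),
      Multiplicative.toAdd (sact (cs.simple i)) lam = lam - wt.repr lam i • alpha i)
    (hcart : ∀ i, wt.repr (alpha i) i = 2)
    (hinj : Function.Injective sact)
    (K : Type*) [AddCommGroup K] [Module (AddMonoidAlgebra ℤ P) K]
    (O : W → K)
    (hbasis : ∃ b : Module.Basis W (AddMonoidAlgebra ℤ P) K, ∀ w, b w = O w)
    (Ti : Fin 2 → Module.End (AddMonoidAlgebra ℤ P) K)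
    (hTi : ∀ (i : Fin 2) (w : W), Ti i (O w) =
      if cs.length w < cs.length (w * cs.simple i) then O (w * cs.simple i) else O w)
    (Xop : P → Module.End (AddMonoidAlgebra ℤ P) K)
    (hXadd : ∀ lam mu, Xop (lam + mu) = Xop lam * Xop mu)
    (hX0 : Xop 0 = 1)
    (hXO1 : ∀ lam, Xop lam (O 1) = (AddMonoidAlgebra.single lam 1 : AddMonoidAlgebra ℤ P) • O 1)
    (hcross : ∀ (i : Fin 2) (lam : P) (q : AddMonoidAlgebra ℤ P),
      ((AddMonoidAlgebra.single lam 1 : AddMonoidAlgebra ℤ P)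
          - AddMonoidAlgebra.single (lam - wt.repr lam i • alpha i) 1
        = (1 - AddMonoidAlgebra.single (-(alpha i)) 1) * q) →
      Xop lam * Ti i = Ti i * Xop (lam - wt.repr lam i • alpha i)
        + q.coeff.sum (fun mu c => c • Xop mu))
    (hA2 : M.M 0 1 = 3)
    (hcartan : ∀ i j : Fin 2, wt.repr (alpha i) j = if i = j then 2 else -1)
    (w0 : W) (hw0 : ∀ w : W, cs.length w ≤ cs.length w0)
    (mul : K → K → K)
    (hmul_comm : ∀ x y, mul x y = mul y x)
    (hmul_one : ∀ x, mul (O w0) x = x)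
    (hmul_add : ∀ x y z, mul (x + y) z = mul x z + mul y z)
    (hmul_smul : ∀ (r : AddMonoidAlgebra ℤ P) (x y : K),
      mul (r • x) y = r • mul x y)
    (hmul_X : ∀ (lam : P) (x y : K), mul (Xop lam x) y = Xop lam (mul x y)) :
    mul (O (cs.simple 0 * cs.simple 1)) (O (cs.simple 1 * cs.simple 0))
        = - O 1 + O (cs.simple 0) + O (cs.simple 1) ∧
    mul (O (cs.simple 1 * cs.simple 0)) (O (cs.simple 1 * cs.simple 0))
        = (AddMonoidAlgebra.single (-(alpha 0)) 1 : AddMonoidAlgebra ℤ P) •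
            O (cs.simple 0)
          - ((AddMonoidAlgebra.single (-(alpha 0)) 1 : AddMonoidAlgebra ℤ P) - 1) •
            O (cs.simple 1 * cs.simple 0) :=
  schubert_products_A2_general M cs wt alpha sact hact K O Ti hTi Xop hXO1 hcross hA2 hcartan w0 hw0
    mul hmul_one hmul_add hmul_smul hmul_X
end
end
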